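/- arXiv:2303.06882 — 6 statements merged into one kernel-verified Lean document; each statement's English description precedes it below -/
import Mathlib

section
/- The operator norm of T equals the essential supremum of w: ‖T‖ = ‖w‖_∞. -/
/-!
`T` is multiplication by `w` after the measure-preserving shift `t ↦ t + a` from `(0,∞)` onto
`(a,∞) ⊆ (0,∞)`, which gives `‖T x‖_p ≤ ‖w‖_∞ ‖x‖_p`. Conversely, for `E ⊆ (0,∞)` of finite
measure the indicator of `E + a` has norm `|E|^{1/p}` and is mapped to `1_E w`; choosing `E`
inside `{|w| > r}` for `r < ‖w‖_∞` gives `‖T‖ ≥ r`.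
-/

open MeasureTheory Set ENNReal

theorem eLpNorm_mul_comp_le {α β 𝕜 : Type*} [MeasurableSpace α] [MeasurableSpace β]
    [NormedRing 𝕜] {μ : Measure α} {ν : Measure β} {f : α → β} (hf : MeasurePreserving f μ ν)
    {g : β → 𝕜} (hg : AEStronglyMeasurable g ν) (w : α → 𝕜) (p : ℝ≥0∞) :
    eLpNorm (fun t => w t * g (f t)) p μ ≤ eLpNormEssSup w μ * eLpNorm g p ν := by
  calc eLpNorm (fun t => w t * g (f t)) p μ ≤ eLpNorm w ∞ μ * eLpNorm (g ∘ f) p μ :=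
        eLpNorm_smul_le_eLpNorm_top_mul_eLpNorm p (hg.comp_measurePreserving hf) w
    _ = eLpNormEssSup w μ * eLpNorm g p ν := by
        rw [eLpNorm_exponent_top, eLpNorm_comp_measurePreserving hg hf]

theorem eLpNormEssSup_le_of_eLpNorm_indicator_le {α F : Type*} [MeasurableSpace α]
    [NormedAddCommGroup F] {μ : Measure α} [SigmaFinite μ] {p : ℝ≥0∞} (hp : p ≠ 0) {w : α → F}
    (hw : AEStronglyMeasurable w μ) {C : ℝ≥0∞}
    (h : ∀ E, MeasurableSet E → μ E < ∞ → eLpNorm (E.indicator w) p μ ≤ C * μ E ^ (1 / p.toReal)) :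
    eLpNormEssSup w μ ≤ C := by
  refine le_of_forall_lt_imp_le_of_dense fun r hr => ?_
  set S := {t | r < ‖hw.mk w t‖ₑ}
  have hS : MeasurableSet S := measurableSet_lt measurable_const hw.stronglyMeasurable_mk.enorm
  have hSpos : 0 < μ S := by
    refine pos_iff_ne_zero.2 fun hS0 => hr.not_ge ?_
    rw [eLpNormEssSup_congr_ae hw.ae_eq_mk]
    exact essSup_le_of_ae_le r <| (measure_eq_zero_iff_ae_notMem.1 hS0).mono fun t ht => not_lt.1 ht
  obtain ⟨E, hE, hES, hEpos, hEfin⟩ := Measure.exists_subset_measure_lt_top hS hSpos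
  have hr_le : r * μ E ^ (1 / p.toReal) ≤ eLpNorm (E.indicator w) p μ := by
    rw [← enorm_eq_self r, ← eLpNorm_indicator_const' hE hEpos.ne' hp]
    refine eLpNorm_mono_enorm_ae ?_
    filter_upwards [hw.ae_eq_mk] with t ht
    by_cases htE : t ∈ E
    · simpa [htE, ht] using (hES htE).le
    · simp [htE]
  have hpow_ne_zero : μ E ^ (1 / p.toReal) ≠ 0 := (ENNReal.rpow_pos hEpos hEfin.ne).ne'
  have hpow_ne_top : μ E ^ (1 / p.toReal) ≠ ∞ :=
    ENNReal.rpow_ne_top_of_nonneg (by positivity) hEfin.ne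
  exact (ENNReal.mul_le_mul_iff_left hpow_ne_zero hpow_ne_top).1 (hr_le.trans (h E hE hEfin))

section HalfLine

variable {a b : ℝ}

theorem measurePreserving_add_right_restrict_Ioi (a b : ℝ) :
    MeasurePreserving (· + a) (volume.restrict (Ioi b)) (volume.restrict (Ioi (b + a))) := by
  have h := (measurePreserving_add_right volume a).restrict_preimage (measurableSet_Ioi (a := b + a))
  rwa [show (· + a) ⁻¹' Ioi (b + a) = Ioi b by ext; simp] at h

theorem volume_restrict_Ioi_add_le (ha : 0 ≤ a) :
    volume.restrict (Ioi (b + a)) ≤ volume.restrict (Ioi b) :=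
  Measure.restrict_mono (Ioi_subset_Ioi (by linarith)) le_rfl

theorem eLpNorm_mul_comp_add_right_le (ha : 0 ≤ a) {𝕜 : Type*} [NormedRing 𝕜] {g : ℝ → 𝕜}
    (hg : AEStronglyMeasurable g (volume.restrict (Ioi b))) (w : ℝ → 𝕜) (p : ℝ≥0∞) :
    eLpNorm (fun t => w t * g (t + a)) p (volume.restrict (Ioi b)) ≤
      eLpNormEssSup w (volume.restrict (Ioi b)) * eLpNorm g p (volume.restrict (Ioi b)) := by
  calc _ ≤ eLpNormEssSup w (volume.restrict (Ioi b)) *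
          eLpNorm g p (volume.restrict (Ioi (b + a))) :=
        eLpNorm_mul_comp_le (measurePreserving_add_right_restrict_Ioi a b)
          (hg.mono_measure (volume_restrict_Ioi_add_le ha)) w p
    _ ≤ _ := mul_le_mul_right (eLpNorm_mono_measure g (volume_restrict_Ioi_add_le ha)) _

theorem exists_eLpNorm_le_comp_add_right_ae_eq_indicator (ha : 0 ≤ a) (p : ℝ≥0∞) {E : Set ℝ}
    (hE : MeasurableSet E) (hμE : volume.restrict (Ioi b) E < ∞) :
    ∃ x : Lp ℂ p (volume.restrict (Ioi b)),
      eLpNorm x p (volume.restrict (Ioi b)) ≤ volume.restrict (Ioi b) E ^ (1 / p.toReal) ∧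
      (fun t => x (t + a)) =ᵐ[volume.restrict (Ioi b)] E.indicator fun _ => 1 := by
  set B := (· - a) ⁻¹' E ∩ Ioi (b + a)
  have hB : MeasurableSet B := (measurable_sub_const a hE).inter measurableSet_Ioi
  have hμB : volume.restrict (Ioi b) B = volume.restrict (Ioi b) E := by
    have hB' : B = (· - a) ⁻¹' (E ∩ Ioi b) := by ext t; simp [B]
    rw [Measure.restrict_apply hB, inter_eq_left.2 fun t ht => ?_, hB',
      (measurePreserving_sub_right volume a).measure_preimage
        (hE.inter measurableSet_Ioi).nullMeasurableSet,
      Measure.restrict_apply hE]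
    exact (le_add_of_nonneg_right ha).trans_lt ht.2
  set x := indicatorConstLp p hB (hμB ▸ hμE.ne) (1 : ℂ)
  have hx : x =ᵐ[volume.restrict (Ioi b)] B.indicator fun _ => 1 := indicatorConstLp_coeFn
  refine ⟨x, ?_, ?_⟩
  · rw [eLpNorm_congr_ae hx, ← hμB]
    simpa using eLpNorm_indicator_const_le (μ := volume.restrict (Ioi b)) (s := B) (1 : ℂ) p
  · have hx' := (Measure.absolutelyContinuous_of_le (volume_restrict_Ioi_add_le ha)).ae_le hx
    filter_upwards [(measurePreserving_add_right_restrict_Ioi a b).quasiMeasurePreserving.ae_eq_comp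
      hx', ae_restrict_mem measurableSet_Ioi] with t ht htb
    simp only [Function.comp_apply] at ht
    have hmem : t + a ∈ B ↔ t ∈ E := by simp [B, mem_Ioi.1 htb]
    rw [ht]
    by_cases htE : t ∈ E <;> simp [htE, hmem]

end HalfLine

theorem stmt0_general (p : ENNReal) [Fact (1 ≤ p)] (a : ℝ) (ha : 0 < a)
    (w : ℝ → ℂ)
    (hw : AEStronglyMeasurable w (volume.restrict (Set.Ioi (0:ℝ))))
    (T : Lp ℂ p (volume.restrict (Set.Ioi (0:ℝ))) →L[ℂ]
         Lp ℂ p (volume.restrict (Set.Ioi (0:ℝ))))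
    (hT : ∀ x : Lp ℂ p (volume.restrict (Set.Ioi (0:ℝ))),
      (T x : ℝ → ℂ) =ᵐ[volume.restrict (Set.Ioi (0:ℝ))] fun t => w t * x (t + a)) :
    ‖T‖ = (eLpNormEssSup w (volume.restrict (Set.Ioi (0:ℝ)))).toReal := by
  have hp : p ≠ 0 := (zero_lt_one.trans_le Fact.out).ne'
  have hupper : ‖T‖ₑ ≤ eLpNormEssSup w (volume.restrict (Ioi 0)) := T.opENorm_le_bound fun x => by
    rw [Lp.enorm_def, Lp.enorm_def, eLpNorm_congr_ae (hT x)]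
    exact eLpNorm_mul_comp_add_right_le ha.le (Lp.aestronglyMeasurable x) w p
  have hlower : eLpNormEssSup w (volume.restrict (Ioi 0)) ≤ ‖T‖ₑ :=
    eLpNormEssSup_le_of_eLpNorm_indicator_le hp hw fun E hE hμE => by
      obtain ⟨x, hx_norm, hx_shift⟩ :=
        exists_eLpNorm_le_comp_add_right_ae_eq_indicator ha.le p hE hμE
      have hTx : E.indicator w =ᵐ[volume.restrict (Ioi 0)] T x := by
        filter_upwards [hT x, hx_shift] with t hTt hxt
        rw [hTt, hxt]
        by_cases htE : t ∈ E <;> simp [htE]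
      rw [eLpNorm_congr_ae hTx, ← Lp.enorm_def]
      exact T.le_opENorm_of_le (by rwa [Lp.enorm_def])
  rw [← toReal_enorm, le_antisymm hupper hlower]

/-- For `1 ≤ p < ∞`, `a > 0`, and `w` a measurable essentially bounded
function on `(0,∞)`, the bounded operator `T` on `L^p(0,∞)` given by
`(Tx)(t) = w(t)·x(t+a)` has operator norm `‖T‖ = ‖w‖_∞`. -/
theorem stmt0 (p : ENNReal) [Fact (1 ≤ p)] (hp : p ≠ ⊤) (a : ℝ) (ha : 0 < a)
    (w : ℝ → ℂ)
    (hw : AEStronglyMeasurable w (volume.restrict (Set.Ioi (0:ℝ))))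
    (hwbdd : eLpNormEssSup w (volume.restrict (Set.Ioi (0:ℝ))) ≠ ⊤)
    (T : Lp ℂ p (volume.restrict (Set.Ioi (0:ℝ))) →L[ℂ]
         Lp ℂ p (volume.restrict (Set.Ioi (0:ℝ))))
    (hT : ∀ x : Lp ℂ p (volume.restrict (Set.Ioi (0:ℝ))),
      (T x : ℝ → ℂ) =ᵐ[volume.restrict (Set.Ioi (0:ℝ))] fun t => w t * x (t + a)) :
    ‖T‖ = (eLpNormEssSup w (volume.restrict (Set.Ioi (0:ℝ)))).toReal :=
  stmt0_general p a ha w hw T hT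
end

section
/- The operator T is topologically transitive (equivalently, hypercyclic): for any nonempty open sets U, V ⊆ L^p(0,∞) there exists n ∈ ℕ with T^n(U) ∩ V ≠ ∅. -/
/-!
A function vanishing beyond `M` is killed by `T^n` as soon as `n a ≥ M`, while every `y` has a
preimage under `T^n` of norm at most `m⁻ⁿ ‖y‖`: divide `y` by the weight `∏_{i<n} w(· + i a)`, whose
modulus is at least `mⁿ`, and shift the quotient to the right by `n a`. Given `x ∈ U` and `y ∈ V`,
approximate `x` by a compactly supported `x'` and take such a preimage `u` of `y`: for large `n`,
`x' + u` lies in `U` and `T^n (x' + u) = y`.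
-/

open MeasureTheory Filter Set

local notation "μ₊" => volume.restrict (Ioi (0 : ℝ))

lemma measurePreserving_add_const_restrict_Ioi (c : ℝ) :
    MeasurePreserving (· + c) μ₊ (volume.restrict (Ioi c)) := by
  have h := (measurePreserving_add_right volume c).restrict_preimage (measurableSet_Ioi (a := c))
  rwa [preimage_add_const_Ioi, sub_self] at h

lemma measurePreserving_sub_const_restrict_Ioi (c : ℝ) :
    MeasurePreserving (· - c) (volume.restrict (Ioi c)) μ₊ := by
  have h := (measurePreserving_sub_right volume c).restrict_preimage (measurableSet_Ioi (a := 0))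
  rwa [preimage_sub_const_Ioi, zero_add] at h

lemma quasiMeasurePreserving_add_const_restrict_Ioi {c : ℝ} (hc : 0 ≤ c) :
    Measure.QuasiMeasurePreserving (· + c) μ₊ μ₊ :=
  (measurePreserving_add_const_restrict_Ioi c).quasiMeasurePreserving.mono_right
    (Measure.restrict_mono (Ioi_subset_Ioi hc) le_rfl).absolutelyContinuous

lemma ae_restrict_Ioi_comp_add {P : ℝ → Prop} (h : ∀ᵐ t ∂μ₊, P t) {c : ℝ} (hc : 0 ≤ c) :
    ∀ᵐ t ∂μ₊, P (t + c) :=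
  (quasiMeasurePreserving_add_const_restrict_Ioi hc).ae h

lemma MeasureTheory.Lp.exists_norm_eq_ae_comp_add_eq {E : Type*} [NormedAddCommGroup E]
    {p : ENNReal} (G : Lp E p μ₊) {c : ℝ} (hc : 0 ≤ c) :
    ∃ u : Lp E p μ₊, ‖u‖ = ‖G‖ ∧ ∀ᵐ t ∂μ₊, u (t + c) = G t := by
  have hmp := measurePreserving_sub_const_restrict_Ioi c
  have hres : μ₊.restrict (Ioi c) = volume.restrict (Ioi c) := by
    rw [Measure.restrict_restrict measurableSet_Ioi, inter_eq_left.2 (Ioi_subset_Ioi hc)]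
  have hf : MemLp ((Ioi c).indicator (G ∘ (· - c))) p μ₊ := by
    rw [memLp_indicator_iff_restrict measurableSet_Ioi, hres]
    exact (Lp.memLp G).comp_measurePreserving hmp
  refine ⟨hf.toLp _, ?_, ?_⟩
  · rw [Lp.norm_toLp, Lp.norm_def, eLpNorm_indicator_eq_eLpNorm_restrict measurableSet_Ioi, hres,
      eLpNorm_comp_measurePreserving (Lp.aestronglyMeasurable G) hmp]
  · filter_upwards [ae_restrict_Ioi_comp_add hf.coeFn_toLp hc, ae_restrict_mem measurableSet_Ioi]
      with t ht ht0
    rw [ht, indicator_of_mem (mem_Ioi.2 (by linarith [mem_Ioi.1 ht0])), Function.comp_apply,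
      add_sub_cancel_right]

lemma MeasureTheory.Lp.exists_norm_sub_lt_ae_eq_zero_Ioi {E : Type*} [NormedAddCommGroup E]
    [NormedSpace ℝ E] {p : ENNReal} [Fact (1 ≤ p)] (hp : p ≠ ⊤) {μ : Measure ℝ} [μ.Regular]
    (x : Lp E p μ) {ε : ℝ} (hε : 0 < ε) :
    ∃ (x' : Lp E p μ) (M : ℝ), ‖x - x'‖ < ε ∧ ∀ᵐ t ∂μ, M < t → x' t = 0 := by
  obtain ⟨g, hg_supp, hg_near, -, hg⟩ := (Lp.memLp x).exists_hasCompactSupport_eLpNorm_sub_le hp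
    (ENNReal.ofReal_pos.2 (half_pos hε)).ne'
  obtain ⟨M, hM⟩ := hg_supp.isCompact.bddAbove
  refine ⟨hg.toLp g, M, ?_, ?_⟩
  · rw [← _root_.dist_eq_norm, Lp.dist_def, eLpNorm_congr_ae (EventuallyEq.rfl.sub hg.coeFn_toLp)]
    exact (ENNReal.toReal_le_of_le_ofReal (half_pos hε).le hg_near).trans_lt (half_lt_self hε)
  · filter_upwards [hg.coeFn_toLp] with t ht hMt
    rw [ht]
    exact image_eq_zero_of_notMem_tsupport fun h => (hM h).not_gt hMt

section WeightedShift

variable {𝕜 : Type*} [NormedField 𝕜] {p : ENNReal} [Fact (1 ≤ p)]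
  {T : Lp 𝕜 p μ₊ →L[𝕜] Lp 𝕜 p μ₊} {w : ℝ → 𝕜} {a : ℝ}

def weightProd (w : ℝ → 𝕜) (a : ℝ) (n : ℕ) (t : ℝ) : 𝕜 :=
  ∏ i ∈ Finset.range n, w (t + i * a)

lemma aestronglyMeasurable_weightProd (hw : AEStronglyMeasurable w μ₊) (ha : 0 ≤ a) (n : ℕ) :
    AEStronglyMeasurable (weightProd w a n) μ₊ :=
  Finset.aestronglyMeasurable_fun_prod (Finset.range n) fun i _ =>
    hw.comp_quasiMeasurePreserving
      (quasiMeasurePreserving_add_const_restrict_Ioi (by positivity : 0 ≤ (i : ℝ) * a))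

lemma ae_pow_le_norm_weightProd {m : ℝ} (hm : 0 ≤ m) (hwm : ∀ᵐ t ∂μ₊, m ≤ ‖w t‖) (ha : 0 ≤ a)
    (n : ℕ) : ∀ᵐ t ∂μ₊, m ^ n ≤ ‖weightProd w a n t‖ := by
  have hall : ∀ᵐ t ∂μ₊, ∀ i ∈ Finset.range n, m ≤ ‖w (t + i * a)‖ :=
    eventually_all_finset _ |>.2 fun i _ => ae_restrict_Ioi_comp_add hwm (by positivity)
  filter_upwards [hall] with t ht
  calc m ^ n = ∏ _i ∈ Finset.range n, m := by rw [Finset.prod_const, Finset.card_range]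
    _ ≤ ∏ i ∈ Finset.range n, ‖w (t + i * a)‖ := Finset.prod_le_prod (fun _ _ => hm) ht
    _ = ‖weightProd w a n t‖ := (norm_prod _ _).symm

variable (hT : ∀ x : Lp 𝕜 p μ₊, ⇑(T x) =ᵐ[μ₊] fun t => w t * x (t + a))
include hT

lemma coeFn_pow_apply_ae_eq_weightProd (ha : 0 ≤ a) (n : ℕ) (x : Lp 𝕜 p μ₊) :
    ⇑((T ^ n) x) =ᵐ[μ₊] fun t => weightProd w a n t * x (t + n * a) := by
  induction n generalizing x with
  | zero => simp [weightProd]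
  | succ n ih =>
    rw [pow_succ, mul_apply_eq_comp]
    filter_upwards [ih (T x), ae_restrict_Ioi_comp_add (hT x) (by positivity : 0 ≤ n * a)]
      with t ht hTx
    rw [ht, hTx, weightProd, weightProd, Finset.prod_range_succ, mul_assoc, Nat.cast_succ,
      add_one_mul, add_assoc]

lemma pow_apply_eq_zero_of_ae_eq_zero_Ioi (ha : 0 ≤ a) {x : Lp 𝕜 p μ₊} {M : ℝ}
    (hx : ∀ᵐ t ∂μ₊, M < t → x t = 0) {n : ℕ} (hn : M ≤ n * a) : (T ^ n) x = 0 := by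
  rw [Lp.eq_zero_iff_ae_eq_zero]
  filter_upwards [coeFn_pow_apply_ae_eq_weightProd hT ha n x,
    ae_restrict_Ioi_comp_add hx (c := n * a) (by positivity), ae_restrict_mem measurableSet_Ioi]
    with t ht hxt ht0
  rw [ht, hxt (by linarith [mem_Ioi.1 ht0]), mul_zero, Pi.zero_apply]

lemma exists_pow_apply_eq_and_norm_le (hw : AEStronglyMeasurable w μ₊) {m : ℝ} (hm : 0 < m)
    (hwm : ∀ᵐ t ∂μ₊, m ≤ ‖w t‖) (ha : 0 ≤ a) (n : ℕ) (y : Lp 𝕜 p μ₊) :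
    ∃ u : Lp 𝕜 p μ₊, (T ^ n) u = y ∧ ‖u‖ ≤ (m ^ n)⁻¹ * ‖y‖ := by
  have hρ := ae_pow_le_norm_weightProd hm.le hwm ha n
  have hbound : ∀ᵐ t ∂μ₊, ‖(⇑y / weightProd w a n) t‖ ≤ (m ^ n)⁻¹ * ‖y t‖ := by
    filter_upwards [hρ] with t ht
    rw [Pi.div_apply, norm_div, div_eq_inv_mul]
    gcongr
  have hG : MemLp (⇑y / weightProd w a n) p μ₊ := (Lp.memLp y).of_le_mul
    ((Lp.aestronglyMeasurable y).div₀ (aestronglyMeasurable_weightProd hw ha n)) hbound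
  obtain ⟨u, hu_norm, hu⟩ :=
    Lp.exists_norm_eq_ae_comp_add_eq (hG.toLp _) (by positivity : 0 ≤ n * a)
  refine ⟨u, Lp.ext ?_, ?_⟩
  · filter_upwards [coeFn_pow_apply_ae_eq_weightProd hT ha n u, hu, hG.coeFn_toLp, hρ]
      with t hTu hut hGt hρt
    have hρ0 : weightProd w a n t ≠ 0 := norm_pos_iff.1 ((pow_pos hm n).trans_le hρt)
    rw [hTu, hut, hGt, Pi.div_apply, mul_div_cancel₀ _ hρ0]
  · rw [hu_norm]
    refine Lp.norm_le_mul_norm_of_ae_le_mul ?_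
    filter_upwards [hG.coeFn_toLp, hbound] with t hGt ht
    rwa [hGt]

end WeightedShift

theorem stmt1_general (p : ENNReal) [Fact (1 ≤ p)] (hp : p ≠ ⊤) (a : ℝ) (ha : 0 < a)
    (w : ℝ → ℂ) (m : ℝ) (hm : 1 < m) (hwm : ∀ t : ℝ, 0 < t → m ≤ ‖w t‖)
    (hw : AEStronglyMeasurable w (volume.restrict (Set.Ioi (0:ℝ))))
    (T : Lp ℂ p (volume.restrict (Set.Ioi (0:ℝ))) →L[ℂ]
         Lp ℂ p (volume.restrict (Set.Ioi (0:ℝ))))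
    (hT : ∀ x : Lp ℂ p (volume.restrict (Set.Ioi (0:ℝ))),
      (T x : ℝ → ℂ) =ᵐ[volume.restrict (Set.Ioi (0:ℝ))] fun t => w t * x (t + a)) :
    ∀ U V : Set (Lp ℂ p (volume.restrict (Set.Ioi (0:ℝ)))),
      IsOpen U → IsOpen V → U.Nonempty → V.Nonempty →
        ∃ n : ℕ, ((T ^ n) '' U ∩ V).Nonempty := by
  rintro U V hU - ⟨x, hxU⟩ ⟨y, hyV⟩
  obtain ⟨ε, hε, hball⟩ := Metric.isOpen_iff.1 hU x hxU
  obtain ⟨x', M, hxx', hx'⟩ := Lp.exists_norm_sub_lt_ae_eq_zero_Ioi hp x (half_pos hε)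
  obtain ⟨n, hnM, hn⟩ : ∃ n : ℕ, M ≤ n * a ∧ (m ^ n)⁻¹ * ‖y‖ < ε / 2 := by
    have hdecay : Tendsto (fun n : ℕ => (m ^ n)⁻¹ * ‖y‖) atTop (nhds 0) := by
      simpa using
        (tendsto_inv_atTop_zero.comp (tendsto_pow_atTop_atTop_of_one_lt hm)).mul_const ‖y‖
    exact ((tendsto_natCast_atTop_atTop.atTop_mul_const ha).eventually_ge_atTop M |>.and
      (hdecay.eventually_lt_const (half_pos hε))).exists
  obtain ⟨u, hTu, hu⟩ := exists_pow_apply_eq_and_norm_le hT hw (by linarith)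
    (ae_restrict_of_forall_mem measurableSet_Ioi hwm) ha.le n y
  refine ⟨n, (T ^ n) (x' + u), mem_image_of_mem _ (hball ?_), ?_⟩
  · rw [Metric.mem_ball, dist_eq_norm, add_sub_right_comm]
    linarith [norm_add_le (x' - x) u, norm_sub_rev x' x]
  · rwa [map_add, pow_apply_eq_zero_of_ae_eq_zero_Ioi hT ha.le hx' hnM, zero_add, hTu]

/-- with `|w(t)| ≥ m > 1` and `w` bounded, the bounded operator
`(Tx)(t) = w(t)x(t+a)` on `L^p(0,∞)` is topologically transitive (hypercyclic):
for any nonempty open `U, V` there is `n` with `T^n(U) ∩ V ≠ ∅`. -/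
theorem stmt1 (p : ENNReal) [Fact (1 ≤ p)] (hp : p ≠ ⊤) (a : ℝ) (ha : 0 < a)
    (w : ℝ → ℂ) (m C : ℝ) (hm : 1 < m) (hwm : ∀ t : ℝ, 0 < t → m ≤ ‖w t‖)
    (hwC : ∀ t : ℝ, 0 < t → ‖w t‖ ≤ C)
    (hw : AEStronglyMeasurable w (volume.restrict (Set.Ioi (0:ℝ))))
    (T : Lp ℂ p (volume.restrict (Set.Ioi (0:ℝ))) →L[ℂ]
         Lp ℂ p (volume.restrict (Set.Ioi (0:ℝ))))
    (hT : ∀ x : Lp ℂ p (volume.restrict (Set.Ioi (0:ℝ))),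
      (T x : ℝ → ℂ) =ᵐ[volume.restrict (Set.Ioi (0:ℝ))] fun t => w t * x (t + a)) :
    ∀ U V : Set (Lp ℂ p (volume.restrict (Set.Ioi (0:ℝ)))),
      IsOpen U → IsOpen V → U.Nonempty → V.Nonempty →
        ∃ n : ℕ, ((T ^ n) '' U ∩ V).Nonempty :=
  stmt1_general p hp a ha w m hm hwm hw T hT
end

section
/- For every N ∈ ℕ and every x ∈ L^p(0,Na), the function x_N defined piecewise by x_N(t) = x(t−kNa) / ∏_{i=1}^{kN} w(t−ia) for t ∈ [kNa, (k+1)Na), k ∈ ℤ_+, belongs to L^p(0,∞) and satisfies T^N x_N = x_N, i.e. x_N is a periodic point of T of period N. -/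
open MeasureTheory Set
open scoped ENNReal

/-!
On the block `[kNa, (k+1)Na)` the function `x_N` is a translate of `x` divided by `kN` values of
`w`, so `|x_N(t)| ≤ m^{-kN} |x(t - kNa)|`; the `p`-th powers of the block norms therefore form a
geometric series, and `x_N ∈ L^p`. Applying `T^N` multiplies by `∏_{i<N} w(t + ia)` and shifts `t`
into the next block, whose denominator is exactly that product times the denominator of the
current one.
-/

lemma floor_div_eq_iff_mem_Ico {L t : ℝ} (hL : 0 < L) (ht : 0 ≤ t) {k : ℕ} :
    ⌊t / L⌋₊ = k ↔ t ∈ Ico (k * L) ((k + 1) * L) := by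
  rw [Nat.floor_eq_iff (div_nonneg ht hL.le), le_div_iff₀ hL, div_lt_iff₀ hL]
  rfl

lemma prod_Icc_one_eq_prod_range {M : Type*} [CommMonoid M] (f : ℕ → M) (n : ℕ) :
    ∏ i ∈ Finset.Icc 1 n, f i = ∏ i ∈ Finset.range n, f (i + 1) := by
  rw [← Finset.Ico_add_one_right_eq_Icc, Finset.prod_Ico_eq_prod_range, Nat.add_sub_cancel]
  simp only [add_comm 1]

lemma prod_Icc_add_sub_mul {M : Type*} [CommMonoid M] (f : ℝ → M) (t a : ℝ) (N n : ℕ) :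
    ∏ i ∈ Finset.Icc 1 (N + n), f (t + N * a - i * a)
      = (∏ i ∈ Finset.range N, f (t + i * a)) * ∏ i ∈ Finset.Icc 1 n, f (t - i * a) := by
  simp only [prod_Icc_one_eq_prod_range, Finset.prod_range_add]
  congr 1
  · rw [← Finset.prod_range_reflect]
    refine Finset.prod_congr rfl fun j hj => congrArg f ?_
    rw [Finset.mem_range] at hj
    rw [Nat.cast_add_one, Nat.cast_sub (by omega : j ≤ N - 1), Nat.cast_sub (by omega : 1 ≤ N)]
    ring
  · refine Finset.prod_congr rfl fun j _ => congrArg f ?_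
    push_cast
    ring

lemma measurePreserving_sub_nat_mul_restrict_Ico (L : ℝ) (k : ℕ) :
    MeasurePreserving (fun t => t - k * L) (volume.restrict (Ico (k * L) ((k + 1) * L)))
      (volume.restrict (Ico 0 L)) := by
  have h := (measurePreserving_sub_right volume ((k : ℝ) * L)).restrict_preimage
    (measurableSet_Ico (a := 0) (b := L))
  rwa [preimage_sub_const_Ico, zero_add, ← one_add_mul, add_comm 1] at h

lemma enorm_rpow_le_of_norm_le {E F : Type*} [NormedAddCommGroup E] [NormedAddCommGroup F]
    {x : E} {y : F} {b q : ℝ} (hb : 0 ≤ b) (hq : 0 ≤ q) (k : ℕ) (h : ‖x‖ ≤ b ^ k * ‖y‖) :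
    ‖x‖ₑ ^ q ≤ (ENNReal.ofReal b ^ q) ^ k * ‖y‖ₑ ^ q := by
  have h' : ‖x‖ₑ ≤ ENNReal.ofReal b ^ k * ‖y‖ₑ := by
    rw [← ofReal_norm, ← ofReal_norm, ← ENNReal.ofReal_pow hb, ← ENNReal.ofReal_mul (by positivity)]
    exact ENNReal.ofReal_le_ofReal h
  calc ‖x‖ₑ ^ q ≤ (ENNReal.ofReal b ^ k * ‖y‖ₑ) ^ q := ENNReal.rpow_le_rpow h' hq
    _ = (ENNReal.ofReal b ^ q) ^ k * ‖y‖ₑ ^ q := by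
      rw [ENNReal.mul_rpow_of_nonneg _ _ hq, ← ENNReal.rpow_natCast, ← ENNReal.rpow_natCast,
        ← ENNReal.rpow_mul, ← ENNReal.rpow_mul, mul_comm (k : ℝ), mul_comm]

theorem memLp_restrict_Ici_of_norm_le_geometric {E F : Type*} [NormedAddCommGroup E]
    [NormedAddCommGroup F] {p : ℝ≥0∞} (hp : p ≠ ⊤) {L b : ℝ} (hL : 0 < L) (hb0 : 0 ≤ b)
    (hb1 : b < 1) {f : ℝ → E} {g : ℝ → F} (hg : MemLp g p (volume.restrict (Ico 0 L)))
    (hf_meas : ∀ k : ℕ, AEStronglyMeasurable f (volume.restrict (Ico (k * L) ((k + 1) * L))))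
    (hf_le : ∀ k : ℕ, ∀ t ∈ Ico (k * L) ((k + 1) * L), ‖f t‖ ≤ b ^ k * ‖g (t - k * L)‖) :
    MemLp f p (volume.restrict (Ici 0)) := by
  have hcover : Ici (0 : ℝ) ⊆ ⋃ k : ℕ, Ico (k * L) ((k + 1) * L) := fun t ht =>
    mem_iUnion.2 ⟨_, (floor_div_eq_iff_mem_Ico hL ht).1 rfl⟩
  have hmeas : AEStronglyMeasurable f (volume.restrict (Ici 0)) :=
    (aestronglyMeasurable_iUnion_iff.2 hf_meas).mono_measure (Measure.restrict_mono hcover le_rfl)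
  rcases eq_or_ne p 0 with rfl | hp0
  · exact memLp_zero_iff_aestronglyMeasurable.2 hmeas
  refine ⟨hmeas, (eLpNorm_lt_top_iff_lintegral_rpow_enorm_lt_top hp0 hp).2 ?_⟩
  have hq : 0 < p.toReal := ENNReal.toReal_pos hp0 hp
  set r := ENNReal.ofReal b ^ p.toReal
  have hr : r < 1 := ENNReal.rpow_lt_one (ENNReal.ofReal_lt_one.2 hb1) hq
  set I := ∫⁻ s in Ico 0 L, ‖g s‖ₑ ^ p.toReal
  have hI : I < ∞ := lintegral_rpow_enorm_lt_top_of_eLpNorm_lt_top hp0 hp hg.2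
  have hpiece (k : ℕ) : ∫⁻ t in Ico (k * L) ((k + 1) * L), ‖f t‖ₑ ^ p.toReal ≤ r ^ k * I :=
    calc ∫⁻ t in Ico (k * L) ((k + 1) * L), ‖f t‖ₑ ^ p.toReal
        ≤ ∫⁻ t in Ico (k * L) ((k + 1) * L), r ^ k * ‖g (t - k * L)‖ₑ ^ p.toReal :=
          setLIntegral_mono' measurableSet_Ico fun t ht =>
            enorm_rpow_le_of_norm_le hb0 hq.le k (hf_le k t ht)
      _ = r ^ k * I := by
          rw [lintegral_const_mul' _ _ (ENNReal.pow_ne_top (hr.trans ENNReal.one_lt_top).ne),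
            (measurePreserving_sub_nat_mul_restrict_Ico L k).lintegral_comp_emb
              (measurableEmbedding_subRight _) fun s => ‖g s‖ₑ ^ p.toReal]
  calc ∫⁻ t in Ici 0, ‖f t‖ₑ ^ p.toReal
      ≤ ∫⁻ t in ⋃ k : ℕ, Ico (k * L) ((k + 1) * L), ‖f t‖ₑ ^ p.toReal := lintegral_mono_set hcover
    _ ≤ ∑' k : ℕ, ∫⁻ t in Ico (k * L) ((k + 1) * L), ‖f t‖ₑ ^ p.toReal := lintegral_iUnion_le _ _
    _ ≤ ∑' k : ℕ, r ^ k * I := ENNReal.tsum_le_tsum hpiece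
    _ = (1 - r)⁻¹ * I := by rw [ENNReal.tsum_mul_right, ENNReal.tsum_geometric]
    _ < ∞ := ENNReal.mul_lt_top (ENNReal.inv_lt_top.2 (tsub_pos_of_lt hr)) hI

lemma pow_card_le_norm_prod {ι 𝕜 : Type*} [NormedField 𝕜] (s : Finset ι) (f : ι → 𝕜) {m : ℝ}
    (hm : 0 ≤ m) (h : ∀ i ∈ s, m ≤ ‖f i‖) : m ^ s.card ≤ ‖∏ i ∈ s, f i‖ := by
  rw [norm_prod, ← Finset.prod_const]
  exact Finset.prod_le_prod (fun _ _ => hm) h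

/-- The paper's `x_N`. -/
noncomputable def weightedPeriodicExtension {𝕜 : Type*} [RCLike 𝕜] (w : ℝ → 𝕜) (a : ℝ) (N : ℕ)
    (x : ℝ → 𝕜) (t : ℝ) : 𝕜 :=
  x (t - ⌊t / (N * a)⌋₊ * (N * a)) / ∏ i ∈ Finset.Icc 1 (⌊t / (N * a)⌋₊ * N), w (t - i * a)

section WeightedPeriodicExtension

variable {𝕜 : Type*} [RCLike 𝕜] {w : ℝ → 𝕜} {a : ℝ} {N : ℕ} {x : ℝ → 𝕜}

lemma weightedPeriodicExtension_of_mem_Ico (hL : 0 < (N : ℝ) * a) {k : ℕ} {t : ℝ}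
    (ht : t ∈ Ico (k * (N * a)) ((k + 1) * (N * a))) :
    weightedPeriodicExtension w a N x t
      = x (t - k * (N * a)) / ∏ i ∈ Finset.Icc 1 (k * N), w (t - i * a) := by
  rw [weightedPeriodicExtension,
    (floor_div_eq_iff_mem_Ico hL ((mul_nonneg k.cast_nonneg hL.le).trans ht.1)).2 ht]

theorem memLp_weightedPeriodicExtension {p : ℝ≥0∞} (hp : p ≠ ⊤) (ha : 0 < a) (hN : 1 ≤ N)
    {m : ℝ} (hm : 1 < m) (hwm : ∀ t, m ≤ ‖w t‖) (hw : Measurable w)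
    (hx : MemLp x p (volume.restrict (Ico 0 (N * a)))) :
    MemLp (weightedPeriodicExtension w a N x) p (volume.restrict (Ici 0)) := by
  have hL : 0 < (N : ℝ) * a := mul_pos (Nat.cast_pos.2 hN) ha
  refine memLp_restrict_Ici_of_norm_le_geometric hp hL (b := (m ^ N)⁻¹) (by positivity)
    (inv_lt_one_of_one_lt₀ (one_lt_pow₀ hm (by omega))) hx (fun k => ?_) (fun k t ht => ?_)
  · refine AEStronglyMeasurable.congr ?_ ((ae_restrict_mem measurableSet_Ico).mono
      fun t ht => (weightedPeriodicExtension_of_mem_Ico hL ht).symm)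
    exact (hx.1.comp_measurePreserving (measurePreserving_sub_nat_mul_restrict_Ico _ k)).div₀
      (Finset.measurable_prod _ fun i _ => hw.comp (measurable_sub_const _)).aestronglyMeasurable
  · have hP := pow_card_le_norm_prod (Finset.Icc 1 (k * N)) (fun i : ℕ => w (t - i * a))
      (zero_lt_one.trans hm).le fun i _ => hwm _
    rw [Nat.card_Icc, Nat.add_sub_cancel, pow_mul'] at hP
    rw [weightedPeriodicExtension_of_mem_Ico hL ht, norm_div, inv_pow, div_eq_inv_mul]
    gcongr

theorem prod_mul_weightedPeriodicExtension_add (ha : 0 < a) (hN : 1 ≤ N) (hw : ∀ t, w t ≠ 0)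
    {t : ℝ} (ht : 0 ≤ t) :
    (∏ i ∈ Finset.range N, w (t + i * a)) * weightedPeriodicExtension w a N x (t + N * a)
      = weightedPeriodicExtension w a N x t := by
  have hL : 0 < (N : ℝ) * a := mul_pos (Nat.cast_pos.2 hN) ha
  have hk := (floor_div_eq_iff_mem_Ico hL ht).1 rfl
  set k := ⌊t / (N * a)⌋₊
  have hk1 : t + N * a ∈ Ico (((k + 1 : ℕ) : ℝ) * (N * a)) (((k + 1 : ℕ) + 1 : ℝ) * (N * a)) := by
    push_cast
    constructor <;> linarith [hk.1, hk.2]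
  have hA : ∏ i ∈ Finset.range N, w (t + i * a) ≠ 0 := Finset.prod_ne_zero_iff.2 fun i _ => hw _
  rw [weightedPeriodicExtension_of_mem_Ico hL hk, weightedPeriodicExtension_of_mem_Ico hL hk1,
    Nat.succ_mul, add_comm (k * N), add_sub_assoc, prod_Icc_add_sub_mul, ← mul_div_assoc,
    mul_div_mul_left _ _ hA]
  congr 2
  push_cast
  ring

end WeightedPeriodicExtension

theorem stmt3_general (p : ENNReal) (hp : p ≠ ⊤) (a : ℝ) (ha : 0 < a)
    (w : ℝ → ℂ) (m : ℝ) (hm : 1 < m) (hwm : ∀ t : ℝ, m ≤ ‖w t‖)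
    (hw : Measurable w)
    (N : ℕ) (hN : 1 ≤ N) (x : ℝ → ℂ)
    (hx : MemLp x p (volume.restrict (Set.Ioo (0:ℝ) (N * a))))
    (xN : ℝ → ℂ)
    (hxN : ∀ t : ℝ, 0 ≤ t →
      xN t = x (t - (⌊t / (N * a)⌋).toNat * (N * a)) /
        ∏ i ∈ Finset.Icc 1 ((⌊t / (N * a)⌋).toNat * N), w (t - i * a)) :
    MemLp xN p (volume.restrict (Set.Ioi (0:ℝ))) ∧
      (fun t => (∏ i ∈ Finset.range N, w (t + i * a)) * xN (t + N * a))
        =ᵐ[volume.restrict (Set.Ioi (0:ℝ))] xN := by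
  have hxN_eq {t : ℝ} (ht : 0 ≤ t) : xN t = weightedPeriodicExtension w a N x t := by
    rw [hxN t ht, Int.floor_toNat, weightedPeriodicExtension]
  have hx' : MemLp x p (volume.restrict (Ico 0 (N * a))) := by
    rwa [← Measure.restrict_congr_set Ioo_ae_eq_Ico]
  have hw0 (t : ℝ) : w t ≠ 0 := norm_pos_iff.1 ((zero_lt_one.trans hm).trans_le (hwm t))
  refine ⟨?_, ?_⟩
  · refine ((memLp_weightedPeriodicExtension hp ha hN hm hwm hw hx').mono_measure
      (Measure.restrict_mono Ioi_subset_Ici_self le_rfl)).ae_eq ?_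
    exact (ae_restrict_mem measurableSet_Ioi).mono fun t ht => (hxN_eq (le_of_lt ht)).symm
  · filter_upwards [ae_restrict_mem measurableSet_Ioi] with t (ht : 0 < t)
    rw [hxN_eq ht.le, hxN_eq (by positivity), prod_mul_weightedPeriodicExtension_add ha hN hw0 ht.le]

/-- for every `N ≥ 1` and `x ∈ L^p(0,Na)`, the function
`x_N(t) = x(t−kNa) / ∏_{i=1}^{kN} w(t−ia)` for `t ∈ [kNa,(k+1)Na)` belongs to
`L^p(0,∞)` and satisfies `T^N x_N = x_N`, i.e. it is a periodic point of
`(Tx)(t) = w(t)x(t+a)` of period `N`. -/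
theorem stmt3 (p : ENNReal) [Fact (1 ≤ p)] (hp : p ≠ ⊤) (a : ℝ) (ha : 0 < a)
    (w : ℝ → ℂ) (m C : ℝ) (hm : 1 < m) (hwm : ∀ t : ℝ, m ≤ ‖w t‖)
    (hwC : ∀ t : ℝ, ‖w t‖ ≤ C) (hw : Measurable w)
    (N : ℕ) (hN : 1 ≤ N) (x : ℝ → ℂ)
    (hx : MemLp x p (volume.restrict (Set.Ioo (0:ℝ) (N * a))))
    (xN : ℝ → ℂ)
    (hxN : ∀ t : ℝ, 0 ≤ t →
      xN t = x (t - (⌊t / (N * a)⌋).toNat * (N * a)) /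
        ∏ i ∈ Finset.Icc 1 ((⌊t / (N * a)⌋).toNat * N), w (t - i * a)) :
    MemLp xN p (volume.restrict (Set.Ioi (0:ℝ))) ∧
      (fun t => (∏ i ∈ Finset.range N, w (t + i * a)) * xN (t + N * a))
        =ᵐ[volume.restrict (Set.Ioi (0:ℝ))] xN :=
  stmt3_general p hp a ha w m hm hwm hw N hN x hx xN hxN
end

section
/- Every eigenvalue λ of T satisfies |λ| < ‖w‖_∞, i.e. the point spectrum σ_p(T) is contained in the open disc {λ ∈ ℂ : |λ| < ‖w‖_∞}. -/
/-!
If `Tx = λx` with `‖λ‖ ≥ ‖w‖_∞`, then `‖λ‖‖x(t)‖ = ‖w(t)‖‖x(t+a)‖ ≤ ‖λ‖‖x(t+a)‖`, so `‖x‖` is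
a.e. non-decreasing along shifts by `a` (`λ ≠ 0` because `‖w‖ ≥ m > 0`). For `g = ‖x‖^p` this gives
`∫_{(0,∞)} g ≤ ∫_{(na,∞)} g` for all `n`, and the right side is the tail of a finite integral,
so it tends to `0`. Hence `x = 0`.
-/

open MeasureTheory Filter Set Topology
open scoped ENNReal

theorem setLIntegral_Ioi_comp_add_right (g : ℝ → ℝ≥0∞) (c d : ℝ) :
    ∫⁻ t in Ioi c, g (t + d) = ∫⁻ t in Ioi (c + d), g t := by
  have := (measurePreserving_add_right volume d).setLIntegral_comp_preimage_emb
    (measurableEmbedding_addRight d) g (Ioi (c + d))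
  rwa [preimage_add_const_Ioi, add_sub_cancel_right] at this

theorem tendsto_setLIntegral_Ioi_atTop {g : ℝ → ℝ≥0∞} {c : ℝ} (hg : ∫⁻ t in Ioi c, g t ≠ ∞) :
    Tendsto (fun s ↦ ∫⁻ t in Ioi s, g t) atTop (𝓝 0) := by
  have hν : ∀ s, volume.withDensity g (Ioi s) = ∫⁻ t in Ioi s, g t :=
    fun s ↦ withDensity_apply g measurableSet_Ioi
  have hempty : ⋂ s : ℝ, Ioi s = ∅ := iInter_eq_empty_iff.2 fun t ↦ ⟨t, lt_irrefl t⟩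
  have := tendsto_measure_iInter_atTop (μ := volume.withDensity g)
    (fun s ↦ measurableSet_Ioi.nullMeasurableSet) (fun _ _ h ↦ Ioi_subset_Ioi h) ⟨c, by rwa [hν]⟩
  rwa [hempty, measure_empty, Function.comp_def, funext hν] at this

theorem setLIntegral_Ioi_eq_zero_of_le_comp_add {g : ℝ → ℝ≥0∞} {c a : ℝ} (ha : 0 < a)
    (hg : ∀ᵐ t ∂volume.restrict (Ioi c), g t ≤ g (t + a))
    (hfin : ∫⁻ t in Ioi c, g t ≠ ∞) : ∫⁻ t in Ioi c, g t = 0 := by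
  have step : ∀ s, c ≤ s → ∫⁻ t in Ioi s, g t ≤ ∫⁻ t in Ioi (s + a), g t := fun s hs ↦
    calc ∫⁻ t in Ioi s, g t ≤ ∫⁻ t in Ioi s, g (t + a) :=
          lintegral_mono_ae (ae_restrict_of_ae_restrict_of_subset (Ioi_subset_Ioi hs) hg)
      _ = ∫⁻ t in Ioi (s + a), g t := setLIntegral_Ioi_comp_add_right g s a
  have iterate : ∀ n : ℕ, ∫⁻ t in Ioi c, g t ≤ ∫⁻ t in Ioi (c + n * a), g t := by
    intro n
    induction n with
    | zero => simp
    | succ n ih =>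
      refine ih.trans ?_
      rw [Nat.cast_succ, add_one_mul, ← add_assoc]
      exact step _ (le_add_of_nonneg_right (by positivity))
  have tail : Tendsto (fun n : ℕ ↦ ∫⁻ t in Ioi (c + n * a), g t) atTop (𝓝 0) :=
    (tendsto_setLIntegral_Ioi_atTop hfin).comp <| tendsto_atTop_add_const_left _ _ <|
      tendsto_natCast_atTop_atTop.atTop_mul_const ha
  exact le_antisymm (ge_of_tendsto' tail iterate) zero_le
theorem Lp.eq_zero_of_norm_le_norm_comp_add {E : Type*} [NormedAddCommGroup E] {p : ℝ≥0∞}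
    (hp0 : p ≠ 0) (hp : p ≠ ∞) {c a : ℝ} (ha : 0 < a) (x : Lp E p (volume.restrict (Ioi c)))
    (hx : ∀ᵐ t ∂volume.restrict (Ioi c), ‖x t‖ ≤ ‖x (t + a)‖) : x = 0 := by
  have hint : ∫⁻ t in Ioi c, ‖x t‖ₑ ^ p.toReal = 0 := by
    refine setLIntegral_Ioi_eq_zero_of_le_comp_add ha ?_
      (lintegral_rpow_enorm_lt_top_of_eLpNorm_lt_top hp0 hp (Lp.eLpNorm_lt_top x)).ne
    filter_upwards [hx] with t ht
    gcongr
    exact enorm_le_iff_norm_le.2 ht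
  rw [Lp.eq_zero_iff_ae_eq_zero, ← eLpNorm_eq_zero_iff (Lp.aestronglyMeasurable x) hp0,
    eLpNorm_eq_lintegral_rpow_enorm_toReal hp0 hp, hint,
    ENNReal.zero_rpow_of_pos (one_div_pos.2 (ENNReal.toReal_pos hp0 hp))]

theorem stmt5_general (p : ENNReal) [Fact (1 ≤ p)] (hp : p ≠ ⊤) (a : ℝ) (ha : 0 < a)
    (w : ℝ → ℂ) (m : ℝ) (hm : 1 < m) (hwm : ∀ t : ℝ, 0 < t → m ≤ ‖w t‖)
    (hwbdd : eLpNormEssSup w (volume.restrict (Set.Ioi (0:ℝ))) ≠ ⊤)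
    (T : Lp ℂ p (volume.restrict (Set.Ioi (0:ℝ))) →L[ℂ]
         Lp ℂ p (volume.restrict (Set.Ioi (0:ℝ))))
    (hT : ∀ x : Lp ℂ p (volume.restrict (Set.Ioi (0:ℝ))),
      (T x : ℝ → ℂ) =ᵐ[volume.restrict (Set.Ioi (0:ℝ))] fun t => w t * x (t + a)) :
    ∀ (l : ℂ) (x : Lp ℂ p (volume.restrict (Set.Ioi (0:ℝ)))),
      x ≠ 0 → T x = l • x →
        ‖l‖ < (eLpNormEssSup w (volume.restrict (Set.Ioi (0:ℝ)))).toReal := by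
  set μ := volume.restrict (Ioi (0:ℝ))
  intro l x hx hTx
  by_contra! hl
  have hw_ne_zero : eLpNormEssSup w μ ≠ 0 := by
    rw [Ne, eLpNormEssSup_eq_zero_iff]
    intro hw0
    have hμ : μ ≠ 0 := by simp [μ, Measure.restrict_eq_zero]
    refine hμ (ae_eq_bot.1 (eventually_false_iff_eq_bot.1 ?_))
    filter_upwards [ae_restrict_mem measurableSet_Ioi, hw0] with t ht hwt
    have := hwm t ht
    simp only [hwt, Pi.zero_apply, norm_zero] at this
    linarith
  have hl_pos : 0 < ‖l‖ := (ENNReal.toReal_pos hw_ne_zero hwbdd).trans_le hl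
  have hw_le : ∀ᵐ t ∂μ, ‖w t‖ ≤ ‖l‖ := by
    filter_upwards [enorm_ae_le_eLpNormEssSup w μ] with t ht
    exact (toReal_enorm (w t) ▸ ENNReal.toReal_mono hwbdd ht).trans hl
  have hx_mono : ∀ᵐ t ∂μ, ‖x t‖ ≤ ‖x (t + a)‖ := by
    filter_upwards [hT x, hTx ▸ Lp.coeFn_smul l x, hw_le] with t hTt hlt hwt
    have heigen : ‖l‖ * ‖x t‖ = ‖w t‖ * ‖x (t + a)‖ := by
      rw [← norm_mul, ← norm_mul, ← hTt, hlt, Pi.smul_apply, smul_eq_mul]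
    exact le_of_mul_le_mul_left (heigen.trans_le (by gcongr)) hl_pos
  exact hx (Lp.eq_zero_of_norm_le_norm_comp_add (zero_lt_one.trans_le Fact.out).ne' hp ha x hx_mono)

/-- every eigenvalue `λ` of the bounded operator
`(Tx)(t) = w(t)x(t+a)` on `L^p(0,∞)` satisfies `|λ| < ‖w‖_∞`, i.e. the point
spectrum is contained in the open disc of radius `‖w‖_∞`. -/
theorem stmt5 (p : ENNReal) [Fact (1 ≤ p)] (hp : p ≠ ⊤) (a : ℝ) (ha : 0 < a)
    (w : ℝ → ℂ) (m C : ℝ) (hm : 1 < m) (hwm : ∀ t : ℝ, 0 < t → m ≤ ‖w t‖)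
    (hwC : ∀ t : ℝ, 0 < t → ‖w t‖ ≤ C)
    (hw : AEStronglyMeasurable w (volume.restrict (Set.Ioi (0:ℝ))))
    (hwbdd : eLpNormEssSup w (volume.restrict (Set.Ioi (0:ℝ))) ≠ ⊤)
    (T : Lp ℂ p (volume.restrict (Set.Ioi (0:ℝ))) →L[ℂ]
         Lp ℂ p (volume.restrict (Set.Ioi (0:ℝ))))
    (hT : ∀ x : Lp ℂ p (volume.restrict (Set.Ioi (0:ℝ))),
      (T x : ℝ → ℂ) =ᵐ[volume.restrict (Set.Ioi (0:ℝ))] fun t => w t * x (t + a)) :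
    ∀ (l : ℂ) (x : Lp ℂ p (volume.restrict (Set.Ioi (0:ℝ)))),
      x ≠ 0 → T x = l • x →
        ‖l‖ < (eLpNormEssSup w (volume.restrict (Set.Ioi (0:ℝ)))).toReal :=
  stmt5_general p hp a ha w m hm hwm hwbdd T hT
end

section
/- The map S defined on compactly supported p-integrable functions by (Sx)(t) = x(t−a)/w(t−a) for t > a and (Sx)(t) = 0 otherwise, maps compactly supported functions to compactly supported functions, satisfies TS = I, and satisfies ‖S^n x‖_p ≤ b^{−n}‖x‖_p → 0 as n → ∞ for every such x. -/
/-!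
`S` is the translation `t ↦ t + a` followed by division by `w`. Translation maps `L^p(0, ∞)`
isometrically onto `L^p(a, ∞)` and `|1 / w| ≤ b⁻¹`, so `‖S x‖_p ≤ b⁻¹ ‖x‖_p`; iterating gives
`‖Sⁿ x‖_p ≤ b⁻ⁿ ‖x‖_p`, which tends to `0` because `b > 1`.
-/

open MeasureTheory Filter Set

/-- The right-inverse map `S`: `(Sx)(t) = x(t−a)/w(t−a)` for `t > a`, `0` otherwise. -/
noncomputable def Sshift (w : ℝ → ℝ) (a : ℝ) (x : ℝ → ℝ) : ℝ → ℝ :=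
  fun t => if a < t then x (t - a) / w (t - a) else 0

lemma Sshift_eq_indicator (w : ℝ → ℝ) (a : ℝ) (x : ℝ → ℝ) :
    Sshift w a x = (Ioi a).indicator fun t => x (t - a) / w (t - a) := by
  ext t
  simp only [Sshift, indicator_apply, mem_Ioi]

lemma Sshift_eq_zero_of_le {w : ℝ → ℝ} {a R : ℝ} {x : ℝ → ℝ} (hR : ∀ t, R ≤ t → x t = 0)
    {t : ℝ} (ht : R + a ≤ t) : Sshift w a x t = 0 := by
  simp only [Sshift, hR (t - a) (by linarith), zero_div, ite_self]

lemma mul_Sshift_add {w : ℝ → ℝ} {t : ℝ} (hwt : w t ≠ 0) (a : ℝ) (x : ℝ → ℝ) (ht : 0 < t) :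
    w t * Sshift w a x (t + a) = x t := by
  simp only [Sshift, lt_add_iff_pos_left, ht, if_true, add_sub_cancel_right]
  field_simp

lemma measurePreserving_sub_restrict_Ioi (a : ℝ) :
    MeasurePreserving (fun t : ℝ => t - a) (volume.restrict (Ioi a))
      (volume.restrict (Ioi 0)) := by
  have h := (measurePreserving_sub_right (volume : Measure ℝ) a).restrict_preimage
    (s := Ioi 0) measurableSet_Ioi
  rwa [show (fun t : ℝ => t - a) ⁻¹' Ioi 0 = Ioi a by ext t; simp] at h

section Bounds

variable {w : ℝ → ℝ} {a : ℝ} {x : ℝ → ℝ}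

lemma aestronglyMeasurable_Sshift (hw : Measurable w)
    (hx : AEStronglyMeasurable x (volume.restrict (Ioi 0))) :
    AEStronglyMeasurable (Sshift w a x) (volume.restrict (Ioi 0)) := by
  have hshift : AEStronglyMeasurable (fun t => x (t - a)) (volume.restrict (Ioi a)) :=
    hx.comp_measurePreserving (measurePreserving_sub_restrict_Ioi a)
  have hw' : AEStronglyMeasurable (fun t => w (t - a)) (volume.restrict (Ioi a)) :=
    (hw.comp (measurable_id.sub_const a)).aestronglyMeasurable
  rw [Sshift_eq_indicator]
  exact ((aestronglyMeasurable_indicator_iff measurableSet_Ioi).mpr (hshift.div₀ hw')).restrict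

lemma eLpNorm_Sshift_le (p : ENNReal) {b : ℝ} (hb : 0 < b) (hwb : ∀ t, b ≤ |w t|)
    (hx : AEStronglyMeasurable x (volume.restrict (Ioi 0))) :
    eLpNorm (Sshift w a x) p (volume.restrict (Ioi 0)) ≤
      ENNReal.ofReal b⁻¹ * eLpNorm x p (volume.restrict (Ioi 0)) :=
  calc eLpNorm (Sshift w a x) p (volume.restrict (Ioi 0))
      ≤ eLpNorm (Sshift w a x) p volume := eLpNorm_mono_measure _ Measure.restrict_le_self
    _ = eLpNorm (fun t => x (t - a) / w (t - a)) p (volume.restrict (Ioi a)) := by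
        rw [Sshift_eq_indicator, eLpNorm_indicator_eq_eLpNorm_restrict measurableSet_Ioi]
    _ ≤ eLpNorm (b⁻¹ • fun t => x (t - a)) p (volume.restrict (Ioi a)) := by
        refine eLpNorm_mono fun t => ?_
        rw [Pi.smul_apply, smul_eq_mul, Real.norm_eq_abs, Real.norm_eq_abs, abs_div, abs_mul,
          abs_inv, abs_of_pos hb, div_eq_inv_mul]
        gcongr
        exact hwb _
    _ = ENNReal.ofReal b⁻¹ * eLpNorm x p (volume.restrict (Ioi 0)) := by
        rw [eLpNorm_const_smul, ← ofReal_norm, Real.norm_of_nonneg (by positivity)]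
        exact congrArg _ (eLpNorm_comp_measurePreserving hx (measurePreserving_sub_restrict_Ioi a))

lemma aestronglyMeasurable_iterate_Sshift (hw : Measurable w)
    (hx : AEStronglyMeasurable x (volume.restrict (Ioi 0))) (n : ℕ) :
    AEStronglyMeasurable ((Sshift w a)^[n] x) (volume.restrict (Ioi 0)) := by
  induction n with
  | zero => exact hx
  | succ n ih =>
    rw [Function.iterate_succ_apply']
    exact aestronglyMeasurable_Sshift hw ih

lemma eLpNorm_iterate_Sshift_le (p : ENNReal) (hw : Measurable w) {b : ℝ} (hb : 0 < b)
    (hwb : ∀ t, b ≤ |w t|) (hx : AEStronglyMeasurable x (volume.restrict (Ioi 0))) (n : ℕ) :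
    eLpNorm ((Sshift w a)^[n] x) p (volume.restrict (Ioi 0)) ≤
      ENNReal.ofReal ((b ^ n)⁻¹) * eLpNorm x p (volume.restrict (Ioi 0)) := by
  induction n with
  | zero => simp
  | succ n ih =>
    rw [Function.iterate_succ_apply']
    calc eLpNorm (Sshift w a ((Sshift w a)^[n] x)) p (volume.restrict (Ioi 0))
        ≤ ENNReal.ofReal b⁻¹ * eLpNorm ((Sshift w a)^[n] x) p (volume.restrict (Ioi 0)) :=
          eLpNorm_Sshift_le p hb hwb (aestronglyMeasurable_iterate_Sshift hw hx n)
      _ ≤ ENNReal.ofReal b⁻¹ * (ENNReal.ofReal ((b ^ n)⁻¹) *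
            eLpNorm x p (volume.restrict (Ioi 0))) := by gcongr
      _ = ENNReal.ofReal ((b ^ (n + 1))⁻¹) * eLpNorm x p (volume.restrict (Ioi 0)) := by
          rw [← mul_assoc, ← ENNReal.ofReal_mul (by positivity), pow_succ', mul_inv]

end Bounds

lemma tendsto_ofReal_inv_pow_atTop {b : ℝ} (hb : 1 < b) :
    Tendsto (fun n : ℕ => ENNReal.ofReal ((b ^ n)⁻¹)) atTop (nhds 0) := by
  simpa using ENNReal.tendsto_ofReal
    (tendsto_inv_atTop_zero.comp (tendsto_pow_atTop_atTop_of_one_lt hb))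

theorem stmt9_general (p : ENNReal) (a : ℝ)
    (w : ℝ → ℝ) (hw : Measurable w) (b : ℝ) (hb : 1 < b)
    (hwb : ∀ t : ℝ, b ≤ |w t|)
    (x : ℝ → ℝ) (hx : MemLp x p (volume.restrict (Set.Ioi (0:ℝ))))
    (hsupp : ∃ R : ℝ, ∀ t : ℝ, R ≤ t → x t = 0) :
    (∃ R' : ℝ, ∀ t : ℝ, R' ≤ t → Sshift w a x t = 0) ∧
    MemLp (Sshift w a x) p (volume.restrict (Set.Ioi (0:ℝ))) ∧
    (∀ t : ℝ, 0 < t → w t * Sshift w a x (t + a) = x t) ∧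
    (∀ n : ℕ, eLpNorm ((Sshift w a)^[n] x) p (volume.restrict (Set.Ioi (0:ℝ))) ≤
      ENNReal.ofReal ((b ^ n)⁻¹) * eLpNorm x p (volume.restrict (Set.Ioi (0:ℝ)))) ∧
    Tendsto (fun n : ℕ => eLpNorm ((Sshift w a)^[n] x) p
      (volume.restrict (Set.Ioi (0:ℝ)))) atTop (nhds 0) := by
  have hb0 : 0 < b := one_pos.trans hb
  obtain ⟨R, hR⟩ := hsupp
  have hw0 : ∀ t, w t ≠ 0 := fun t h => by linarith [hwb t, abs_eq_zero.mpr h]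
  have hbound := eLpNorm_iterate_Sshift_le p hw hb0 hwb hx.1 (a := a)
  refine ⟨⟨R + a, fun t => Sshift_eq_zero_of_le hR⟩,
    ⟨aestronglyMeasurable_Sshift hw hx.1,
      (eLpNorm_Sshift_le p hb0 hwb hx.1).trans_lt (ENNReal.mul_lt_top ENNReal.ofReal_lt_top hx.2)⟩,
    fun t => mul_Sshift_add (hw0 t) a x, hbound, ?_⟩
  have hlim := ENNReal.Tendsto.mul_const (tendsto_ofReal_inv_pow_atTop hb) (Or.inr hx.2.ne)
  rw [zero_mul] at hlim
  exact tendsto_of_tendsto_of_tendsto_of_le_of_le tendsto_const_nhds hlim (fun _ => zero_le)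
    hbound

/-- with `|w(t)| ≥ b > 1`, the map `S` sends compactly supported
`p`-integrable functions to compactly supported `p`-integrable functions, satisfies
`TS = I` (where `(Tx)(t) = w(t)x(t+a)`), and `‖S^n x‖_p ≤ b^{−n}‖x‖_p → 0`. -/
theorem stmt9 (p : ENNReal) [Fact (1 ≤ p)] (hp : p ≠ ⊤) (a : ℝ) (ha : 0 < a)
    (w : ℝ → ℝ) (hw : Measurable w) (b : ℝ) (hb : 1 < b)
    (hwb : ∀ t : ℝ, b ≤ |w t|)
    (x : ℝ → ℝ) (hx : MemLp x p (volume.restrict (Set.Ioi (0:ℝ))))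
    (hsupp : ∃ R : ℝ, ∀ t : ℝ, R ≤ t → x t = 0) :
    (∃ R' : ℝ, ∀ t : ℝ, R' ≤ t → Sshift w a x t = 0) ∧
    MemLp (Sshift w a x) p (volume.restrict (Set.Ioi (0:ℝ))) ∧
    (∀ t : ℝ, 0 < t → w t * Sshift w a x (t + a) = x t) ∧
    (∀ n : ℕ, eLpNorm ((Sshift w a)^[n] x) p (volume.restrict (Set.Ioi (0:ℝ))) ≤
      ENNReal.ofReal ((b ^ n)⁻¹) * eLpNorm x p (volume.restrict (Set.Ioi (0:ℝ)))) ∧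
    Tendsto (fun n : ℕ => eLpNorm ((Sshift w a)^[n] x) p
      (volume.restrict (Set.Ioi (0:ℝ)))) atTop (nhds 0) :=
  stmt9_general p a w hw b hb hwb x hx hsupp
end

section
/- Every complex number is an eigenvalue of T: σ(T) = σ_p(T) = ℂ. Concretely, for any λ ∈ ℂ and any nonzero y ∈ L^p(0,a), the function x(t) = λ^n · y(t−na) / ∏_{i=1}^{n} w(t−ia) for t ∈ [na,(n+1)a) lies in L^p(0,∞) ∖ {0}, belongs to D(T), and satisfies Tx = λx. -/
open MeasureTheory Filter Set
open scoped ENNReal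

/-!
On the block `[n a, (n + 1) a)` the eigenfunction is `λ ^ n y(t - n a)` divided by `n` values of
`w`. Since `‖w‖ → ∞`, all but a bounded number `K` of these factors exceed `‖λ‖ + 1`, and the
others are `≥ 1`, so the block is dominated by `(‖λ‖ + 1) ^ K (‖λ‖ / (‖λ‖ + 1)) ^ n ‖y(t - n a)‖`:
the `L^p` norms of the blocks decay geometrically. The eigen-equation `w(t) x(t + a) = λ x(t)` is
the recursion linking consecutive blocks.
-/

theorem prod_Icc_one_succ {M : Type*} [CommMonoid M] (f : ℕ → M) (n : ℕ) :
    ∏ i ∈ Finset.Icc 1 (n + 1), f i = f 1 * ∏ i ∈ Finset.Icc 1 n, f (i + 1) := by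
  induction n with
  | zero => simp
  | succ n ih =>
    rw [Finset.prod_Icc_succ_top (by omega), ih, Finset.prod_Icc_succ_top (by omega), mul_assoc]

theorem pow_le_prod_Icc_of_one_le {f : ℕ → ℝ} {M : ℝ} {m n : ℕ} (hM : 0 ≤ M) (hmn : m ≤ n)
    (hf1 : ∀ i ∈ Finset.Icc 1 n, 1 ≤ f i) (hfM : ∀ i ∈ Finset.Icc 1 m, M ≤ f i) :
    M ^ m ≤ ∏ i ∈ Finset.Icc 1 n, f i :=
  calc M ^ m = ∏ _i ∈ Finset.Icc 1 m, M := by simp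
    _ ≤ ∏ i ∈ Finset.Icc 1 m, f i := Finset.prod_le_prod (fun _ _ => hM) hfM
    _ ≤ ∏ i ∈ Finset.Icc 1 n, f i :=
      Finset.prod_le_prod_of_subset_of_one_le (Finset.Icc_subset_Icc_right hmn)
        (fun i hi => hM.trans (hfM i hi)) fun i hi _ => hf1 i hi

section Sawtooth

variable {a : ℝ}

theorem sub_nat_floor_div_mul_mem_Ico (ha : 0 < a) {t : ℝ} (ht : 0 ≤ t) :
    t - ⌊t / a⌋₊ * a ∈ Ico 0 a := by
  have h1 := Nat.floor_le (div_nonneg ht ha.le)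
  have h2 := Nat.lt_floor_add_one (t / a)
  rw [le_div_iff₀ ha] at h1
  rw [div_lt_iff₀ ha] at h2
  constructor <;> linarith

theorem floor_add_mul_div_of_mem_Ico (ha : 0 < a) {s : ℝ} (hs : s ∈ Ico 0 a) (n : ℕ) :
    ⌊(s + n * a) / a⌋₊ = n := by
  rw [Nat.floor_eq_iff (by have := hs.1; positivity), le_div_iff₀ ha, div_lt_iff₀ ha]
  constructor <;> nlinarith [hs.1, hs.2]

theorem volume_preimage_sub_nat_floor_mul (E : Set ℝ) (hE : volume E = 0) :
    volume ((fun t => t - ⌊t / a⌋₊ * a) ⁻¹' E) = 0 := by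
  refine measure_mono_null (t := ⋃ n : ℕ, (fun t => t - n * a) ⁻¹' E)
    (fun t ht => mem_iUnion.2 ⟨⌊t / a⌋₊, ht⟩) (measure_iUnion_null fun n => ?_)
  simpa only [sub_eq_add_neg] using (measure_preimage_add_right volume (-(n * a)) E).trans hE

theorem ae_restrict_Ici_sub_nat_floor_mul (ha : 0 < a) {P : ℝ → Prop}
    (hP : ∀ᵐ s ∂volume.restrict (Ico 0 a), P s) :
    ∀ᵐ t ∂volume.restrict (Ici 0), P (t - ⌊t / a⌋₊ * a) := by
  rw [ae_restrict_iff' measurableSet_Ico, ae_iff] at hP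
  rw [ae_restrict_iff' measurableSet_Ici, ae_iff]
  exact measure_mono_null (fun t ht => fun h => ht fun ht0 =>
    h (sub_nat_floor_div_mul_mem_Ico ha ht0)) (volume_preimage_sub_nat_floor_mul _ hP)

theorem lintegral_Ici_eq_tsum_Ico (ha : 0 < a) (f : ℝ → ℝ≥0∞) :
    ∫⁻ t in Ici 0, f t = ∑' n : ℕ, ∫⁻ s in Ico 0 a, f (s + n * a) := by
  have hmono : Monotone fun n : ℕ => (n : ℝ) * a := fun m n h =>
    mul_le_mul_of_nonneg_right (Nat.cast_le.2 h) ha.le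
  have hcover := iUnion_Ico_map_succ_eq_Ici (f := fun n : ℕ => (n : ℝ) * a)
      (fun n => hmono bot_le) fun ⟨x, hx⟩ => by
        obtain ⟨n, hn⟩ := exists_nat_gt (x / a)
        exact (hx ⟨n, rfl⟩).not_gt ((div_lt_iff₀ ha).1 hn)
  simp only [Order.succ_eq_add_one, Nat.bot_eq_zero, Nat.cast_zero, zero_mul] at hcover
  have hdisj := hmono.pairwise_disjoint_on_Ico_succ
  simp only [Order.succ_eq_add_one] at hdisj
  rw [← hcover, lintegral_iUnion (fun n => measurableSet_Ico) hdisj]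
  congr 1 with n
  rw [(measurePreserving_add_right volume ((n : ℝ) * a)).setLIntegral_comp_emb
    (measurableEmbedding_addRight _), image_add_const_Ico]
  push_cast
  ring_nf

theorem memLp_pow_nat_floor_mul_comp_sub (ha : 0 < a) {p : ℝ≥0∞} (hp0 : p ≠ 0) (hp : p ≠ ⊤)
    {r : ℝ} (hr0 : 0 ≤ r) (hr1 : r < 1) {h : ℝ → ℝ} (hh : MemLp h p (volume.restrict (Ico 0 a))) :
    MemLp (fun t => r ^ ⌊t / a⌋₊ * h (t - ⌊t / a⌋₊ * a)) p (volume.restrict (Ici 0)) := by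
  obtain ⟨g, hg, hhg⟩ := hh.1
  refine ⟨?_, ?_⟩
  · have hmeas : Measurable fun t : ℝ => r ^ ⌊t / a⌋₊ * g (t - ⌊t / a⌋₊ * a) := by
      have := hg.measurable
      fun_prop
    refine hmeas.aestronglyMeasurable.congr ?_
    filter_upwards [ae_restrict_Ici_sub_nat_floor_mul ha hhg] with t ht
    rw [ht]
  have hq : 0 < p.toReal := ENNReal.toReal_pos hp0 hp
  have hblock : ∀ n : ℕ,
      ∫⁻ s in Ico 0 a, ‖r ^ ⌊(s + n * a) / a⌋₊ * h (s + n * a - ⌊(s + n * a) / a⌋₊ * a)‖ₑ ^ p.toReal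
        = (‖r‖ₑ ^ p.toReal) ^ n * ∫⁻ s in Ico 0 a, ‖h s‖ₑ ^ p.toReal := by
    intro n
    rw [← lintegral_const_mul' _ _ (by finiteness)]
    refine setLIntegral_congr_fun measurableSet_Ico fun s hs => ?_
    rw [floor_add_mul_div_of_mem_Ico ha hs, add_sub_cancel_right, enorm_mul, enorm_pow,
      ENNReal.mul_rpow_of_nonneg _ _ hq.le, ← ENNReal.rpow_natCast_mul, mul_comm (n : ℝ),
      ENNReal.rpow_mul_natCast]
  have hgeom : ‖r‖ₑ ^ p.toReal < 1 := by
    refine ENNReal.rpow_lt_one ?_ hq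
    rw [Real.enorm_eq_ofReal hr0]
    exact ENNReal.ofReal_lt_one.2 hr1
  rw [eLpNorm_lt_top_iff_lintegral_rpow_enorm_lt_top hp0 hp, lintegral_Ici_eq_tsum_Ico ha]
  simp_rw [hblock]
  rw [ENNReal.tsum_mul_right, ENNReal.tsum_geometric]
  exact ENNReal.mul_lt_top (ENNReal.inv_lt_top.2 (tsub_pos_of_lt hgeom))
    ((eLpNorm_lt_top_iff_lintegral_rpow_enorm_lt_top hp0 hp).1 hh.2)

end Sawtooth

noncomputable def shiftEigenfunction (a : ℝ) (w : ℝ → ℂ) (l : ℂ) (y : ℝ → ℂ) (t : ℝ) : ℂ :=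
  l ^ ⌊t / a⌋₊ * y (t - ⌊t / a⌋₊ * a) / ∏ i ∈ Finset.Icc 1 ⌊t / a⌋₊, w (t - i * a)

namespace shiftEigenfunction

variable {a : ℝ} {w : ℝ → ℂ} {l : ℂ} {y : ℝ → ℂ}

theorem measurable (hw : Measurable w) (hy : Measurable y) :
    Measurable (shiftEigenfunction a w l y) := by
  have hΦ : Measurable fun q : ℝ × ℕ =>
      l ^ q.2 * y (q.1 - q.2 * a) / ∏ i ∈ Finset.Icc 1 q.2, w (q.1 - i * a) := by
    refine measurable_from_prod_countable_left fun n => ?_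
    dsimp only
    have hprod : Measurable fun t : ℝ => ∏ i ∈ Finset.Icc 1 n, w (t - i * a) :=
      Finset.measurable_prod _ fun i _ => by fun_prop
    exact (by fun_prop : Measurable fun t : ℝ => l ^ n * y (t - n * a)).div hprod
  exact hΦ.comp (f := fun t : ℝ => (t, ⌊t / a⌋₊))
    (measurable_id.prodMk (Nat.measurable_floor.comp (measurable_id.div_const a)))

theorem eq_of_mem_Ico (ha : 0 < a) {t : ℝ} (ht : t ∈ Ico 0 a) :
    shiftEigenfunction a w l y t = y t := by
  simp [shiftEigenfunction, Nat.floor_eq_zero.2 ((div_lt_one ha).2 ht.2)]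

theorem mul_apply_add (ha : 0 < a) {t : ℝ} (ht : 0 ≤ t) (hwt : w t ≠ 0) :
    w t * shiftEigenfunction a w l y (t + a) = l * shiftEigenfunction a w l y t := by
  have hfloor : ⌊(t + a) / a⌋₊ = ⌊t / a⌋₊ + 1 := by
    rw [add_div, div_self ha.ne', Nat.floor_add_one (div_nonneg ht ha.le)]
  have harg : ∀ k : ℕ, t + a - ((k + 1 : ℕ) : ℝ) * a = t - k * a := fun k => by push_cast; ring
  simp only [shiftEigenfunction, hfloor, prod_Icc_one_succ, harg, Nat.cast_zero, zero_mul, sub_zero]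
  rw [← mul_div_assoc, mul_div_mul_left _ _ hwt, pow_succ', mul_assoc, mul_div_assoc]

theorem norm_le (ha : 0 < a) (hw1 : ∀ s, 1 ≤ ‖w s‖) {R : ℝ}
    (hR : ∀ s, R ≤ s → ‖l‖ + 1 ≤ ‖w s‖) {t : ℝ} (ht : 0 ≤ t) :
    ‖shiftEigenfunction a w l y t‖ ≤
      (‖l‖ + 1) ^ ⌈R / a⌉₊ * ((‖l‖ / (‖l‖ + 1)) ^ ⌊t / a⌋₊ * ‖y (t - ⌊t / a⌋₊ * a)‖) := by
  set n := ⌊t / a⌋₊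
  set K := ⌈R / a⌉₊
  set M := ‖l‖ + 1
  have hM : 1 ≤ M := le_add_of_nonneg_left (norm_nonneg l)
  have hnt : n * a ≤ t := (le_div_iff₀ ha).1 (Nat.floor_le (div_nonneg ht ha.le))
  have hRK : R ≤ K * a := (div_le_iff₀ ha).1 (Nat.le_ceil _)
  have hprod : M ^ (n - K) ≤ ∏ i ∈ Finset.Icc 1 n, ‖w (t - i * a)‖ := by
    -- the factors with `i ≤ n - K` have argument `t - i a ≥ K a ≥ R`
    refine pow_le_prod_Icc_of_one_le (by positivity) (Nat.sub_le n K) (fun i _ => hw1 _)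
      fun i hi => hR _ ?_
    have hiK : (i : ℝ) + K ≤ n := by
      obtain ⟨hi1, hi2⟩ := Finset.mem_Icc.1 hi
      exact_mod_cast (by omega : i + K ≤ n)
    nlinarith
  have hnum : ‖l‖ ^ n ≤ M ^ K * (‖l‖ / M) ^ n * M ^ (n - K) :=
    calc ‖l‖ ^ n = (‖l‖ / M) ^ n * M ^ n := by
          rw [div_pow, div_mul_cancel₀ _ (by positivity)]
      _ ≤ (‖l‖ / M) ^ n * M ^ (K + (n - K)) := by gcongr; omega
      _ = M ^ K * (‖l‖ / M) ^ n * M ^ (n - K) := by ring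
  rw [shiftEigenfunction, norm_div, norm_mul, norm_pow, norm_prod,
    div_le_iff₀ ((by positivity : (0 : ℝ) < M ^ (n - K)).trans_le hprod)]
  calc ‖l‖ ^ n * ‖y (t - n * a)‖ ≤ M ^ K * (‖l‖ / M) ^ n * M ^ (n - K) * ‖y (t - n * a)‖ := by
        gcongr
    _ ≤ M ^ K * (‖l‖ / M) ^ n * (∏ i ∈ Finset.Icc 1 n, ‖w (t - i * a)‖) * ‖y (t - n * a)‖ := by
        gcongr
    _ = _ := by ring

theorem memLp (ha : 0 < a) {p : ℝ≥0∞} (hp0 : p ≠ 0) (hp : p ≠ ⊤) (hw : Measurable w)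
    (hw1 : ∀ s, 1 ≤ ‖w s‖) (hw_tendsto : Tendsto (fun t => ‖w t‖) atTop atTop)
    (hy : MemLp y p (volume.restrict (Ico 0 a))) :
    MemLp (shiftEigenfunction a w l y) p (volume.restrict (Ici 0)) := by
  obtain ⟨R, hR⟩ := eventually_atTop.1 (hw_tendsto.eventually_ge_atTop (‖l‖ + 1))
  obtain ⟨g, hg, hyg⟩ := hy.1
  have hdom := (memLp_pow_nat_floor_mul_comp_sub (r := ‖l‖ / (‖l‖ + 1)) ha hp0 hp (by positivity)
    ((div_lt_one (by positivity)).2 (lt_add_one _)) hy.norm).const_mul ((‖l‖ + 1) ^ ⌈R / a⌉₊)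
  refine hdom.of_le ?_ ?_
  · refine (measurable (a := a) (l := l) hw hg.measurable).aestronglyMeasurable.congr ?_
    filter_upwards [ae_restrict_Ici_sub_nat_floor_mul ha hyg.symm] with t ht
    simp only [shiftEigenfunction, ht]
  · filter_upwards [ae_restrict_mem measurableSet_Ici] with t ht
    rw [Real.norm_of_nonneg (by positivity)]
    exact norm_le ha hw1 hR ht

end shiftEigenfunction

/-- for the unbounded operator `(Tx)(t) = w(t)x(t+a)` on the complex
space `L^p(0,∞)` (with `|w(t)| ≥ b > 1` and `|w(t)| → ∞`), every `λ ∈ ℂ` is an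
eigenvalue (so `σ(T) = σ_p(T) = ℂ`): for any nonzero `y ∈ L^p(0,a)` the function
`x(t) = λ^n y(t−na)/∏_{i=1}^n w(t−ia)` on `[na,(n+1)a)` is a nonzero element of
`L^p(0,∞)` lying in `D(T)` and satisfying `Tx = λx`. -/
theorem stmt12 (p : ENNReal) [Fact (1 ≤ p)] (hp : p ≠ ⊤) (a : ℝ) (ha : 0 < a)
    (w : ℝ → ℂ) (hw : Measurable w) (b : ℝ) (hb : 1 < b)
    (hwb : ∀ t : ℝ, b ≤ ‖w t‖)
    (htend : Tendsto (fun t => ‖w t‖) atTop atTop)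
    (l : ℂ)
    (y : ℝ → ℂ) (hy : MemLp y p (volume.restrict (Set.Ioo (0:ℝ) a)))
    (hy0 : ¬ y =ᵐ[volume.restrict (Set.Ioo (0:ℝ) a)] 0)
    (x : ℝ → ℂ)
    (hx : ∀ t : ℝ, 0 ≤ t →
      x t = l ^ (⌊t / a⌋).toNat * y (t - (⌊t / a⌋).toNat * a) /
        ∏ i ∈ Finset.Icc 1 (⌊t / a⌋).toNat, w (t - i * a)) :
    MemLp x p (volume.restrict (Set.Ioi (0:ℝ))) ∧
      ¬ x =ᵐ[volume.restrict (Set.Ioi (0:ℝ))] 0 ∧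
      MemLp (fun t => w t * x (t + a)) p (volume.restrict (Set.Ioi (0:ℝ))) ∧
      (fun t => w t * x (t + a)) =ᵐ[volume.restrict (Set.Ioi (0:ℝ))]
        fun t => l * x t := by
  have hw1 (t : ℝ) : 1 ≤ ‖w t‖ := hb.le.trans (hwb t)
  have hxF (t : ℝ) (ht : 0 ≤ t) : x t = shiftEigenfunction a w l y t := by
    simp only [hx t ht, Int.floor_toNat, shiftEigenfunction]
  have hyIco : MemLp y p (volume.restrict (Ico 0 a)) := by
    rwa [← Measure.restrict_congr_set Ioo_ae_eq_Ico]
  have hmem : MemLp x p (volume.restrict (Ioi 0)) := by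
    have hF : MemLp (shiftEigenfunction a w l y) p (volume.restrict (Ici 0)) :=
      shiftEigenfunction.memLp ha (zero_lt_one.trans_le Fact.out).ne' hp hw hw1 htend hyIco
    refine (hF.mono_measure (Measure.restrict_mono Ioi_subset_Ici_self le_rfl)).ae_eq ?_
    filter_upwards [ae_restrict_mem measurableSet_Ioi] with t ht using (hxF t ht.le).symm
  have heig : (fun t => w t * x (t + a)) =ᵐ[volume.restrict (Ioi 0)] fun t => l * x t := by
    filter_upwards [ae_restrict_mem measurableSet_Ioi] with t ht
    rw [hxF t ht.le, hxF (t + a) (add_pos ht ha).le,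
      shiftEigenfunction.mul_apply_add ha ht.le (norm_pos_iff.1 (one_pos.trans_le (hw1 t)))]
  have hxy : y =ᵐ[volume.restrict (Ioo 0 a)] x := by
    filter_upwards [ae_restrict_mem measurableSet_Ioo] with t ht
    rw [hxF t ht.1.le, shiftEigenfunction.eq_of_mem_Ico ha (Ioo_subset_Ico_self ht)]
  refine ⟨hmem, fun hx0 => hy0 ?_, (hmem.const_mul l).ae_eq heig.symm, heig⟩
  exact hxy.trans (ae_restrict_of_ae_restrict_of_subset Ioo_subset_Ioi_self hx0)
end
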